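/- arXiv:2202.11808 — 4 statements merged into one kernel-verified Lean document; each statement's English description precedes it below -/
import Mathlib

section
/- There is a bijection between the set of partitions of {1,…,n} into exactly m nonempty internally ordered blocks, and the set of pairs (σ, w) where σ is a permutation of {1,…,n} with exactly m cycles and w assigns to each cycle c of σ a nonnegative integer w(c) strictly less than the length of c. -/
/-- A partition of `[n]` into exactly `m` nonempty linearly ordered blocks, modeled as a
finite set of nonempty duplicate-free lists such that every element of `Fin n` lies in
exactly one list. -/
def IsOrderedPartition (n m : ℕ) (S : Finset (List (Fin n))) : Prop :=
  S.card = m ∧ (∀ l ∈ S, l ≠ [] ∧ l.Nodup) ∧ (∀ x : Fin n, ∃! l, l ∈ S ∧ x ∈ l)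

/-- The setoid on `Fin n` whose classes are the cycles (orbits) of `σ`. -/
def sameCycleSetoid {n : ℕ} (σ : Equiv.Perm (Fin n)) : Setoid (Fin n) :=
  ⟨σ.SameCycle, ⟨fun x => Equiv.Perm.SameCycle.refl σ x, fun h => h.symm,
    fun h₁ h₂ => h₁.trans h₂⟩⟩

/-- The number of cycles (orbits, including fixed points) of a permutation. -/
noncomputable def numCycles {n : ℕ} (σ : Equiv.Perm (Fin n)) : ℕ :=
  Nat.card (Quotient (sameCycleSetoid σ))

/-!
An ordered partition `S` gives the permutation sending each element to its successor in its
block (the last one going back to the first), and the weight that records, on each cycle, the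
position of the least element in its block. The blocks are then exactly the cycles, and a cycle
written down in the order of the permutation is determined by the position of any one of its
elements; so the inverse lists each cycle of `σ` starting `w` steps before its least element.
-/

open Function

lemma List.Nodup.natCard_subtype_mem {α : Type*} {l : List α} (hl : l.Nodup) :
    Nat.card {x // x ∈ l} = l.length := by
  classical
  rw [← List.toFinset_card_of_nodup hl, ← Nat.card_eq_finsetCard]
  exact Nat.card_congr (Equiv.subtypeEquivRight fun x => List.mem_toFinset.symm)

namespace Equiv.Perm

section Orbit

variable {α : Type*} (σ : Perm α) (x : α)

lemma minimalPeriod_pos [Finite α] : 0 < minimalPeriod σ x :=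
  minimalPeriod_pos_of_mem_periodicPts (σ.injective.mem_periodicPts x)

lemma pow_mod_minimalPeriod_apply (k : ℕ) :
    (σ ^ (k % minimalPeriod σ x)) x = (σ ^ k) x := by
  simp only [coe_pow, iterate_mod_minimalPeriod_eq]

lemma pow_minimalPeriod_apply : (σ ^ minimalPeriod σ x) x = x := by
  simp only [coe_pow, iterate_minimalPeriod]

variable {σ x}

lemma SameCycle.exists_pow_lt_minimalPeriod [Finite α] {y : α} (h : σ.SameCycle x y) :
    ∃ j < minimalPeriod σ x, (σ ^ j) x = y := by
  obtain ⟨k, rfl⟩ := h.exists_nat_pow_eq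
  exact ⟨k % minimalPeriod σ x, Nat.mod_lt _ (σ.minimalPeriod_pos x),
    σ.pow_mod_minimalPeriod_apply x k⟩

lemma pow_apply_injOn_Iio_minimalPeriod :
    Set.InjOn (fun j => (σ ^ j) x) (Set.Iio (minimalPeriod σ x)) := by
  simpa only [coe_pow] using iterate_injOn_Iio_minimalPeriod (f := σ) (x := x)

variable (σ x)

noncomputable def orbitList : List α :=
  (List.range (minimalPeriod σ x)).map fun j => (σ ^ j) x

@[simp]
lemma length_orbitList : (σ.orbitList x).length = minimalPeriod σ x := by
  simp [orbitList]

@[simp]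
lemma getElem_orbitList {j : ℕ} (hj : j < (σ.orbitList x).length) :
    (σ.orbitList x)[j] = (σ ^ j) x := by
  simp [orbitList]

lemma nodup_orbitList : (σ.orbitList x).Nodup :=
  List.nodup_range.map_on fun _ hi _ hj h =>
    pow_apply_injOn_Iio_minimalPeriod (List.mem_range.mp hi) (List.mem_range.mp hj) h

lemma mem_orbitList_iff [Finite α] {y : α} : y ∈ σ.orbitList x ↔ σ.SameCycle x y := by
  simp only [orbitList, List.mem_map, List.mem_range]
  constructor
  · rintro ⟨j, -, rfl⟩
    exact sameCycle_pow_right.mpr (SameCycle.refl σ x)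
  · exact SameCycle.exists_pow_lt_minimalPeriod

lemma card_sameCycle_eq_minimalPeriod [Finite α] :
    Nat.card {y // σ.SameCycle x y} = minimalPeriod σ x := by
  rw [← length_orbitList, ← (σ.nodup_orbitList x).natCard_subtype_mem]
  exact Nat.card_congr (Equiv.subtypeEquivRight fun y => (σ.mem_orbitList_iff x).symm)

variable {σ x} in
lemma SameCycle.minimalPeriod_eq [Finite α] {y : α} (h : σ.SameCycle x y) :
    minimalPeriod σ x = minimalPeriod σ y := by
  rw [← card_sameCycle_eq_minimalPeriod, ← card_sameCycle_eq_minimalPeriod]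
  exact Nat.card_congr (Equiv.subtypeEquivRight fun z => ⟨h.symm.trans, h.trans⟩)

end Orbit

section IsCycleList

variable {α : Type*} [DecidableEq α]

/-- `l` lists one cycle of `σ` in the order of `σ`: on the entries of `l`, `σ` is the shift
`l[i] ↦ l[i + 1]`, the last entry going to the first. -/
structure IsCycleList (σ : Perm α) (l : List α) : Prop where
  nodup : l.Nodup
  eqOn_formPerm : Set.EqOn σ l.formPerm {x | x ∈ l}

namespace IsCycleList

variable {σ : Perm α} {l : List α}

lemma pow_apply_eq_formPerm_pow (hl : σ.IsCycleList l) (k : ℕ) {x : α} (hx : x ∈ l) :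
    (σ ^ k) x = (l.formPerm ^ k) x := by
  induction k generalizing x with
  | zero => rfl
  | succ k ih =>
    rw [pow_succ, mul_apply, hl.eqOn_formPerm hx, ih (List.formPerm_apply_mem_of_mem hx),
      ← mul_apply, ← pow_succ]

lemma pow_apply_getElem (hl : σ.IsCycleList l) (k : ℕ) {i : ℕ} (hi : i < l.length) :
    (σ ^ k) l[i] = l[(i + k) % l.length]'(Nat.mod_lt _ (by omega)) := by
  rw [hl.pow_apply_eq_formPerm_pow k (List.getElem_mem hi),
    List.formPerm_pow_apply_getElem _ hl.nodup]

lemma getElem_eq_pow_apply (hl : σ.IsCycleList l) {a : α} (ha : a ∈ l) {i : ℕ}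
    (hi : i < l.length) : l[i] = (σ ^ (l.length - l.idxOf a + i)) a := by
  have ha' : l.idxOf a < l.length := List.idxOf_lt_length_iff.mpr ha
  have h := hl.pow_apply_getElem (l.length - l.idxOf a + i) ha'
  rw [List.getElem_idxOf ha'] at h
  rw [h]
  congr 1
  rw [← Nat.add_assoc, Nat.add_sub_cancel' ha'.le, Nat.add_mod_left, Nat.mod_eq_of_lt hi]

lemma sameCycle_iff_mem [Finite α] (hl : σ.IsCycleList l) {x y : α} (hx : x ∈ l) :
    σ.SameCycle x y ↔ y ∈ l := by
  constructor
  · intro h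
    obtain ⟨k, rfl⟩ := h.exists_nat_pow_eq
    obtain ⟨i, hi, rfl⟩ := List.getElem_of_mem hx
    rw [hl.pow_apply_getElem k hi]
    exact List.getElem_mem _
  · intro hy
    obtain ⟨j, hj, rfl⟩ := List.getElem_of_mem hy
    rw [hl.getElem_eq_pow_apply hx hj]
    exact sameCycle_pow_right.mpr (SameCycle.refl σ x)

lemma minimalPeriod_eq_length [Finite α] (hl : σ.IsCycleList l) {x : α} (hx : x ∈ l) :
    minimalPeriod σ x = l.length := by
  rw [← card_sameCycle_eq_minimalPeriod, ← hl.nodup.natCard_subtype_mem]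
  exact Nat.card_congr (Equiv.subtypeEquivRight fun y => hl.sameCycle_iff_mem hx)

lemma eq_of_idxOf_eq [Finite α] (hl : σ.IsCycleList l) {l' : List α} (hl' : σ.IsCycleList l')
    {a : α} (ha : a ∈ l) (ha' : a ∈ l') (h : l.idxOf a = l'.idxOf a) : l = l' := by
  have hlen : l.length = l'.length := by
    rw [← hl.minimalPeriod_eq_length ha, hl'.minimalPeriod_eq_length ha']
  refine List.ext_getElem hlen fun i hi hi' => ?_
  rw [hl.getElem_eq_pow_apply ha hi, hl'.getElem_eq_pow_apply ha' hi', hlen, h]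

end IsCycleList

lemma isCycleList_orbitList [Finite α] (σ : Perm α) (x : α) :
    σ.IsCycleList (σ.orbitList x) := by
  refine ⟨σ.nodup_orbitList x, fun y hy => ?_⟩
  obtain ⟨i, hi, rfl⟩ := List.getElem_of_mem hy
  rw [List.formPerm_apply_getElem _ (σ.nodup_orbitList x), getElem_orbitList, getElem_orbitList,
    length_orbitList, pow_mod_minimalPeriod_apply, pow_succ', mul_apply]

end IsCycleList

section CycleMin

variable {α : Type*} [Fintype α] [LinearOrder α] (σ : Perm α)

noncomputable def cycleMin (x : α) : α :=
  ({y | σ.SameCycle x y} : Finset α).min' ⟨x, by simpa using SameCycle.refl σ x⟩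

lemma sameCycle_cycleMin (x : α) : σ.SameCycle x (σ.cycleMin x) :=
  (Finset.mem_filter.mp (Finset.min'_mem _ _)).2

variable {σ} in
lemma SameCycle.cycleMin_eq {x y : α} (h : σ.SameCycle x y) : σ.cycleMin x = σ.cycleMin y := by
  unfold cycleMin
  congr 1
  ext z
  simpa using ⟨h.symm.trans, h.trans⟩

variable (w : α → ℕ)

/-- The cycle of `x`, listed in the order of `σ` and rotated so that its least element sits at
position `w x`. -/
noncomputable def weightedCycleList (x : α) : List α :=
  σ.orbitList ((σ ^ (minimalPeriod σ x - w x)) (σ.cycleMin x))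

lemma isCycleList_weightedCycleList (x : α) : σ.IsCycleList (σ.weightedCycleList w x) :=
  σ.isCycleList_orbitList _

lemma mem_weightedCycleList_iff {x y : α} :
    y ∈ σ.weightedCycleList w x ↔ σ.SameCycle x y := by
  rw [weightedCycleList, mem_orbitList_iff, sameCycle_pow_left]
  exact ⟨(σ.sameCycle_cycleMin x).trans, (σ.sameCycle_cycleMin x).symm.trans⟩

lemma mem_weightedCycleList_self (x : α) : x ∈ σ.weightedCycleList w x :=
  (σ.mem_weightedCycleList_iff w).mpr (SameCycle.refl σ x)

lemma idxOf_cycleMin_weightedCycleList {x : α} (hw : w x < minimalPeriod σ x) :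
    (σ.weightedCycleList w x).idxOf (σ.cycleMin x) = w x := by
  set b := (σ ^ (minimalPeriod σ x - w x)) (σ.cycleMin x) with hb_def
  have hb : σ.SameCycle x b :=
    (σ.sameCycle_cycleMin x).trans (sameCycle_pow_right.mpr (SameCycle.refl σ _))
  have hlt : w x < (σ.orbitList b).length := by rwa [length_orbitList, ← hb.minimalPeriod_eq]
  have hmin : (σ.orbitList b)[w x] = σ.cycleMin x := by
    rw [getElem_orbitList, hb_def, ← mul_apply, ← pow_add, Nat.add_sub_cancel' hw.le,
      (σ.sameCycle_cycleMin x).minimalPeriod_eq, pow_minimalPeriod_apply]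
  change (σ.orbitList b).idxOf _ = _
  rw [← hmin, (σ.nodup_orbitList b).idxOf_getElem]

variable {σ w} in
lemma weightedCycleList_eq_of_sameCycle (hw : ∀ x y, σ.SameCycle x y → w x = w y) {x y : α}
    (h : σ.SameCycle x y) : σ.weightedCycleList w x = σ.weightedCycleList w y := by
  rw [weightedCycleList, weightedCycleList, h.minimalPeriod_eq, h.cycleMin_eq, hw x y h]

end CycleMin

end Equiv.Perm

open Equiv Equiv.Perm

lemma numCycles_eq_card {n : ℕ} {σ : Perm (Fin n)} {S : Finset (List (Fin n))}
    (hne : ∀ l ∈ S, l ≠ []) (huniq : ∀ x, ∃! l, l ∈ S ∧ x ∈ l)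
    (hcyc : ∀ l ∈ S, ∀ x ∈ l, ∀ y, σ.SameCycle x y ↔ y ∈ l) :
    numCycles σ = S.card := by
  let f : S → Quotient (sameCycleSetoid σ) := fun l => ⟦l.1.head (hne l.1 l.2)⟧
  have hf : Bijective f := by
    constructor
    · rintro ⟨l, hl⟩ ⟨l', hl'⟩ h
      have hmem : l'.head (hne l' hl') ∈ l :=
        (hcyc l hl _ (List.head_mem _) _).mp (Quotient.exact h)
      exact Subtype.ext ((huniq _).unique ⟨hl, hmem⟩ ⟨hl', List.head_mem _⟩)
    · rintro ⟨x⟩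
      obtain ⟨l, ⟨hl, hx⟩, -⟩ := huniq x
      exact ⟨⟨l, hl⟩, Quotient.sound ((hcyc l hl _ (List.head_mem _) x).mpr hx)⟩
  rw [numCycles, ← Nat.card_eq_of_bijective f hf, Nat.card_eq_finsetCard]

namespace IsOrderedPartition

variable {n m : ℕ} {S : Finset (List (Fin n))} (hS : IsOrderedPartition n m S)

noncomputable def block (x : Fin n) : List (Fin n) :=
  (hS.2.2 x).exists.choose

lemma block_mem (x : Fin n) : hS.block x ∈ S :=
  (hS.2.2 x).exists.choose_spec.1

lemma mem_block (x : Fin n) : x ∈ hS.block x :=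
  (hS.2.2 x).exists.choose_spec.2

lemma block_eq {l : List (Fin n)} {x : Fin n} (hl : l ∈ S) (hx : x ∈ l) : hS.block x = l :=
  (hS.2.2 x).unique ⟨hS.block_mem x, hS.mem_block x⟩ ⟨hl, hx⟩

lemma nodup_block (x : Fin n) : (hS.block x).Nodup :=
  (hS.2.1 _ (hS.block_mem x)).2

lemma block_eq_of_mem {x y : Fin n} (hy : y ∈ hS.block x) : hS.block y = hS.block x :=
  hS.block_eq (hS.block_mem x) hy

lemma injective_formPerm_block : Injective fun x => (hS.block x).formPerm x := by
  intro x y h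
  have hxy : hS.block x = hS.block y := by
    rw [← hS.block_eq_of_mem (List.formPerm_apply_mem_of_mem (hS.mem_block x)),
      ← hS.block_eq_of_mem (List.formPerm_apply_mem_of_mem (hS.mem_block y))]
    exact congrArg hS.block h
  simp only [hxy] at h
  exact (hS.block y).formPerm.injective h

noncomputable def perm : Perm (Fin n) :=
  Equiv.ofBijective (fun x => (hS.block x).formPerm x)
    (Finite.injective_iff_bijective.mp hS.injective_formPerm_block)

lemma isCycleList_block (x : Fin n) : hS.perm.IsCycleList (hS.block x) := by
  refine ⟨hS.nodup_block x, fun y hy => ?_⟩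
  change (hS.block y).formPerm y = _
  rw [hS.block_eq_of_mem hy]

lemma sameCycle_perm_iff {x y : Fin n} : hS.perm.SameCycle x y ↔ y ∈ hS.block x :=
  (hS.isCycleList_block x).sameCycle_iff_mem (hS.mem_block x)

lemma minimalPeriod_perm (x : Fin n) : minimalPeriod hS.perm x = (hS.block x).length :=
  (hS.isCycleList_block x).minimalPeriod_eq_length (hS.mem_block x)

lemma numCycles_perm : numCycles hS.perm = m := by
  refine (numCycles_eq_card (fun l hl => (hS.2.1 l hl).1) hS.2.2 fun l hl x hx y => ?_).trans hS.1
  rw [sameCycle_perm_iff, hS.block_eq hl hx]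

noncomputable def weight (x : Fin n) : ℕ :=
  (hS.block x).idxOf (hS.perm.cycleMin x)

lemma weight_eq_of_sameCycle {x y : Fin n} (h : hS.perm.SameCycle x y) :
    hS.weight x = hS.weight y := by
  rw [weight, weight, h.cycleMin_eq, ← hS.block_eq_of_mem (hS.sameCycle_perm_iff.mp h)]

lemma weight_lt_minimalPeriod (x : Fin n) : hS.weight x < minimalPeriod hS.perm x := by
  rw [minimalPeriod_perm]
  exact List.idxOf_lt_length_iff.mpr (hS.sameCycle_perm_iff.mp (hS.perm.sameCycle_cycleMin x))

lemma block_eq_weightedCycleList (x : Fin n) :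
    hS.block x = hS.perm.weightedCycleList hS.weight x := by
  have hmin := hS.perm.sameCycle_cycleMin x
  refine (hS.isCycleList_block x).eq_of_idxOf_eq (isCycleList_weightedCycleList ..)
    (hS.sameCycle_perm_iff.mp hmin) ((mem_weightedCycleList_iff ..).mpr hmin) ?_
  rw [idxOf_cycleMin_weightedCycleList _ _ (hS.weight_lt_minimalPeriod x)]
  rfl

lemma image_weightedCycleList :
    Finset.univ.image (hS.perm.weightedCycleList hS.weight) = S := by
  ext l
  simp only [Finset.mem_image, Finset.mem_univ, true_and, ← block_eq_weightedCycleList]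
  constructor
  · rintro ⟨x, rfl⟩
    exact hS.block_mem x
  · intro hl
    obtain ⟨x, hx⟩ := List.exists_mem_of_ne_nil l (hS.2.1 l hl).1
    exact ⟨x, hS.block_eq hl hx⟩

end IsOrderedPartition

section WeightedPermutation

variable {n : ℕ} {σ : Perm (Fin n)} {w : Fin n → ℕ}

lemma isOrderedPartition_image_weightedCycleList {m : ℕ} (hm : numCycles σ = m)
    (hw : ∀ x y, σ.SameCycle x y → w x = w y) :
    IsOrderedPartition n m (Finset.univ.image (σ.weightedCycleList w)) := by
  subst hm
  have hcyc : ∀ l ∈ Finset.univ.image (σ.weightedCycleList w), ∀ x ∈ l, ∀ y,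
      σ.SameCycle x y ↔ y ∈ l := by
    simp only [Finset.mem_image, Finset.mem_univ, true_and]
    rintro _ ⟨z, rfl⟩ x hx y
    rw [weightedCycleList_eq_of_sameCycle hw ((mem_weightedCycleList_iff ..).mp hx),
      mem_weightedCycleList_iff]
  have hne : ∀ l ∈ Finset.univ.image (σ.weightedCycleList w), l ≠ [] := by
    simp only [Finset.mem_image, Finset.mem_univ, true_and]
    rintro _ ⟨x, rfl⟩
    exact List.ne_nil_of_mem (mem_weightedCycleList_self σ w x)
  have huniq : ∀ x, ∃! l, l ∈ Finset.univ.image (σ.weightedCycleList w) ∧ x ∈ l := by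
    intro x
    refine ⟨_, ⟨Finset.mem_image_of_mem _ (Finset.mem_univ x),
      mem_weightedCycleList_self σ w x⟩, fun l ⟨hl, hx⟩ => ?_⟩
    obtain ⟨z, -, rfl⟩ := Finset.mem_image.mp hl
    exact weightedCycleList_eq_of_sameCycle hw ((mem_weightedCycleList_iff ..).mp hx)
  refine ⟨(numCycles_eq_card hne huniq hcyc).symm, fun l hl => ⟨hne l hl, ?_⟩, huniq⟩
  obtain ⟨x, -, rfl⟩ := Finset.mem_image.mp hl
  exact (isCycleList_weightedCycleList σ w x).nodup

variable {m : ℕ} (hT : IsOrderedPartition n m (Finset.univ.image (σ.weightedCycleList w)))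

lemma block_image_weightedCycleList (x : Fin n) : hT.block x = σ.weightedCycleList w x :=
  hT.block_eq (Finset.mem_image_of_mem _ (Finset.mem_univ x)) (mem_weightedCycleList_self σ w x)

lemma perm_image_weightedCycleList : hT.perm = σ := by
  refine Equiv.ext fun x => ?_
  change ((hT.block x).formPerm x : Fin n) = σ x
  rw [block_image_weightedCycleList,
    (isCycleList_weightedCycleList σ w x).eqOn_formPerm (mem_weightedCycleList_self σ w x)]

lemma weight_image_weightedCycleList (hlt : ∀ x, w x < minimalPeriod σ x) :
    hT.weight = w := by
  funext x
  rw [IsOrderedPartition.weight, perm_image_weightedCycleList, block_image_weightedCycleList,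
    idxOf_cycleMin_weightedCycleList _ _ (hlt x)]

end WeightedPermutation

/-- There is a bijection between partitions of `[n]` into `m` internally ordered blocks and
weighted permutations `(σ, w)` where `σ` has `m` cycles and the weight of each cycle is a
nonnegative integer strictly smaller than the length of the cycle.  Weights on cycles are
modeled as functions `Fin n → ℕ` constant on each cycle. -/
theorem stmt6 (n m : ℕ) :
    Nonempty ({S : Finset (List (Fin n)) // IsOrderedPartition n m S} ≃
      {p : Equiv.Perm (Fin n) × (Fin n → ℕ) //
        numCycles p.1 = m ∧ (∀ x y, p.1.SameCycle x y → p.2 x = p.2 y) ∧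
        ∀ x, p.2 x < Nat.card {y : Fin n // p.1.SameCycle x y}}) := by
  simp only [card_sameCycle_eq_minimalPeriod]
  exact ⟨{
    toFun := fun S => ⟨(S.2.perm, S.2.weight), S.2.numCycles_perm,
      fun _ _ => S.2.weight_eq_of_sameCycle, S.2.weight_lt_minimalPeriod⟩
    invFun := fun p => ⟨_, isOrderedPartition_image_weightedCycleList p.2.1 p.2.2.1⟩
    left_inv := fun S => Subtype.ext S.2.image_weightedCycleList
    right_inv := fun p => Subtype.ext (Prod.ext (perm_image_weightedCycleList _)
      (weight_image_weightedCycleList _ p.2.2.2)) }⟩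
end

section
/- For nonnegative integers n, m, k, v, j with m ≤ n−1, the coefficient of t^m in the polynomial C(t(k−v)+n−1−j, n−1) (as a polynomial in t) equals (1/(n−1)!)·(k−v)^m · P^{n−1−m}_{−j+1, n−1−j}, where P^s_{u,v} is the s-th elementary symmetric function of the integers in the interval [u,v]. -/
open Polynomial

/-- `P^s_{u,v}`: the `s`-th elementary symmetric function of the integers in `[u,v]`. -/
noncomputable def esymmInterval (u v : ℤ) (s : ℕ) : ℤ :=
  ∑ I ∈ (Finset.Icc u v).powersetCard s, ∏ i ∈ I, i

/-- The polynomial (in `t`) `C(t(k-v)+n-1-j, n-1)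
  = (1/(n-1)!) ∏_{s=0}^{n-2} (t(k-v) + n-1-j-s)`. -/
noncomputable def binomPoly (n k v j : ℕ) : Polynomial ℚ :=
  Polynomial.C (((n - 1).factorial : ℚ))⁻¹ *
    ∏ s ∈ Finset.range (n - 1),
      (Polynomial.C ((k : ℚ) - (v : ℚ)) * Polynomial.X
        + Polynomial.C ((n : ℚ) - 1 - (j : ℚ) - (s : ℚ)))

/-!
The product `∏ₛ ((k - v) X + (n - 1 - j - s))` is `∏ₛ (X + bₛ)` composed with `X ↦ (k - v) X`,
which multiplies the `m`-th coefficient by `(k - v) ^ m`; by Vieta, that coefficient of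
`∏ₛ (X + bₛ)` is the elementary symmetric function of degree `n - 1 - m` in the `bₛ`, and
`bₛ = n - 1 - j - s` for `s < n - 1` runs exactly over the integers of `[1 - j, n - 1 - j]`.
-/

open Finset

theorem Finset.prod_C_mul_X_add_C_coeff {R σ : Type*} [CommSemiring R] (s : Finset σ) (a : R)
    (r : σ → R) {k : ℕ} (h : k ≤ #s) :
    (∏ i ∈ s, (C a * X + C (r i))).coeff k
      = a ^ k * ∑ t ∈ s.powersetCard (#s - k), ∏ i ∈ t, r i := by
  have hcomp : ∏ i ∈ s, (C a * X + C (r i)) = (∏ i ∈ s, (X + C (r i))).comp (C a * X) := by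
    rw [Polynomial.prod_comp]
    simp
  rw [hcomp, comp_C_mul_X_coeff, Finset.prod_X_add_C_coeff _ _ h, mul_comm]

theorem Finset.prod_range_const_sub_eq_prod_Icc {M : Type*} [CommMonoid M] (g : ℤ → M) (c : ℤ)
    (N : ℕ) : ∏ s ∈ range N, g (c - s) = ∏ i ∈ Icc (c + 1 - N) c, g i := by
  refine prod_nbij' (fun s => c - s) (fun i => (c - i).toNat) ?_ ?_ ?_ ?_ fun _ _ => rfl <;>
    intro x hx <;> simp only [mem_range, mem_Icc] at hx ⊢ <;> omega

theorem stmt9 (n m k v j : ℕ) (hn : 0 < n) (hm : m ≤ n - 1) :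
    (binomPoly n k v j).coeff m
      = (1 / ((n - 1).factorial : ℚ)) * ((k : ℚ) - (v : ℚ)) ^ m *
          ((esymmInterval (1 - (j : ℤ)) ((n : ℤ) - 1 - (j : ℤ)) (n - 1 - m)) : ℚ) := by
  have hlow : ((n : ℤ) - 1 - j) + 1 - ((n - 1 : ℕ) : ℤ) = 1 - j := by omega
  have hprod : ∏ s ∈ range (n - 1), (C ((k : ℚ) - v) * X + C ((n : ℚ) - 1 - j - s))
      = ∏ i ∈ Icc (1 - (j : ℤ)) (n - 1 - j), (C ((k : ℚ) - v) * X + C (i : ℚ)) := by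
    rw [← hlow, ← prod_range_const_sub_eq_prod_Icc]
    push_cast
    rfl
  have hcard : #(Icc (1 - (j : ℤ)) (n - 1 - j)) = n - 1 := by rw [Int.card_Icc]; omega
  rw [binomPoly, coeff_C_mul, hprod, prod_C_mul_X_add_C_coeff _ _ _ (hcard ▸ hm), hcard,
    esymmInterval]
  push_cast
  ring
end

section
/- For all integers n ≥ 1, b ≥ 1 and a ≥ 0, the coefficient of x^a in (1+x+⋯+x^{b−1})^n equals ∑_{j=0}^{⌊a/b⌋} (−1)^j C(n,j) C(n−1+a−bj, n−1). -/
/-!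
Over power series, `(1 + X + ⋯ + X^(b-1)) * (1 - X) = 1 - X^b`, so
`(1 + X + ⋯ + X^(b-1))^n = (1 - X^b)^n * (1 - X)^(-n)`. Expanding `(1 - X^b)^n` by the binomial
theorem and using `(1 - X)^(-n) = ∑ₖ C(n-1+k, n-1) X^k` gives the formula; the `j`-th binomial term
reaches `X^a` only when `bj ≤ a`, which cuts the sum off at `a / b`.
-/

theorem Finset.sum_range_ite_mul_le_eq_sum_range_div {M : Type*} [AddCommMonoid M] {g : ℕ → M}
    {n b a : ℕ} (hb : 0 < b) (hg : ∀ j > n, g j = 0) :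
    ∑ j ∈ range (n + 1), (if b * j ≤ a then g j else 0) = ∑ j ∈ range (a / b + 1), g j := by
  have hle : ∀ j, b * j ≤ a ↔ j ≤ a / b := fun j => by rw [Nat.le_div_iff_mul_le hb, mul_comm]
  rw [← eventually_constant_sum (fun j hj => by rw [hg j hj, ite_self]) (le_max_left _ (a / b + 1)),
    eventually_constant_sum (fun j hj => if_neg ((hle j).not.mpr (by omega))) (le_max_right _ _)]
  exact sum_congr rfl fun j hj => if_pos ((hle j).mpr (Nat.lt_succ_iff.mp (mem_range.mp hj)))

namespace PowerSeries

variable {R : Type*} [CommRing R]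

theorem coe_geom_sum_X_mul_one_sub_X (b : ℕ) :
    ((∑ i ∈ Finset.range b, Polynomial.X ^ i : Polynomial R) : R⟦X⟧) * (1 - X) = 1 - X ^ b := by
  rw [← Polynomial.coeToPowerSeries.ringHom_apply, map_sum]
  simp only [map_pow, Polynomial.coeToPowerSeries.ringHom_apply, Polynomial.coe_X]
  linear_combination -geom_sum_mul (X : R⟦X⟧) b

theorem one_sub_X_pow_pow_eq_sum (b n : ℕ) :
    ((1 : R⟦X⟧) - X ^ b) ^ n
      = ∑ j ∈ Finset.range (n + 1), C ((-1 : R) ^ j * n.choose j) * X ^ (b * j) := by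
  rw [sub_eq_add_neg, add_comm, add_pow]
  refine Finset.sum_congr rfl fun j _ => ?_
  rw [neg_pow, one_pow, mul_one, pow_mul, map_mul, map_pow, map_neg, map_one, map_natCast]
  ring

theorem coe_geom_sum_pow_eq (b n : ℕ) :
    ((((∑ i ∈ Finset.range b, Polynomial.X ^ i) ^ n : Polynomial R)) : R⟦X⟧)
      = ((1 : R⟦X⟧) - X ^ b) ^ n * (invOneSubPow R n).val := by
  rw [← coe_geom_sum_X_mul_one_sub_X, mul_pow, mul_assoc, ← invOneSubPow_inv_eq_one_sub_pow,
    Units.inv_eq_val_inv, Units.inv_mul, mul_one, Polynomial.coe_pow]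

theorem coeff_X_pow_mul_invOneSubPow {n : ℕ} (hn : 0 < n) (m a : ℕ) :
    coeff a (X ^ m * (invOneSubPow R n).val)
      = if m ≤ a then ((n - 1 + a - m).choose (n - 1) : R) else 0 := by
  rw [coeff_X_pow_mul', invOneSubPow_val_eq_mk_sub_one_add_choose_of_pos R n hn, coeff_mk]
  split_ifs with h
  · rw [← Nat.add_sub_assoc h]
  · rfl

end PowerSeries

open PowerSeries

theorem stmt10 (n b a : ℕ) (hn : 1 ≤ n) (hb : 1 ≤ b) :
    ((∑ i ∈ Finset.range b, (Polynomial.X : Polynomial ℤ) ^ i) ^ n).coeff a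
      = ∑ j ∈ Finset.range (a / b + 1),
          (-1 : ℤ) ^ j * (n.choose j : ℤ) * ((n - 1 + a - b * j).choose (n - 1) : ℤ) := by
  rw [← Polynomial.coeff_coe, coe_geom_sum_pow_eq, one_sub_X_pow_pow_eq_sum, Finset.sum_mul, map_sum]
  simp_rw [mul_assoc, coeff_C_mul, coeff_X_pow_mul_invOneSubPow hn, mul_ite, mul_zero, ← mul_assoc]
  exact Finset.sum_range_ite_mul_le_eq_sum_range_div hb fun j hj => by
    rw [Nat.choose_eq_zero_of_lt hj, Nat.cast_zero, mul_zero, zero_mul]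
end

section
/- Let c = (c_1,…,c_n) ∈ ℤ_{>0}^n and 0 < k < c_1+⋯+c_n. Then the leading coefficient (coefficient of t^{n−1}) of the Ehrhart polynomial of R_{k,c} equals (1/(n−1)!) ∑_{ℓ=0}^{k−1} B(ℓ,c)·A(n−1, k−ℓ−1), where B(ℓ,c) is the number of integer vectors (b_1,…,b_n) with 0 ≤ b_i ≤ c_i−1 and ∑ b_i = ℓ, and A(n−1,i) is the Eulerian number. -/
open scoped Classical

/-- The number of descents of a permutation `σ` of `Fin m`. -/
noncomputable def descNum {m : ℕ} (σ : Equiv.Perm (Fin m)) : ℕ :=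
  (Finset.univ.filter
    (fun j : Fin m => ∃ h : (j : ℕ) + 1 < m, σ ⟨(j : ℕ) + 1, h⟩ < σ j)).card

/-- The Eulerian number `A(m,i)`. -/
noncomputable def eulerian (m i : ℕ) : ℕ :=
  Nat.card {σ : Equiv.Perm (Fin m) // descNum σ = i}

/-- `B(ℓ,c)`: the number of ways of placing `ℓ` indistinguishable balls into `n` boxes of
capacities `c 1 - 1, …, c n - 1`. -/
def ballCount (n : ℕ) (c : Fin n → ℕ) (ℓ : ℕ) : ℕ :=
  ((Fintype.piFinset (fun i : Fin n => Finset.range (c i))).filter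
    (fun b => ∑ i, b i = ℓ)).card

/-- The number of lattice points of the `t`-th dilate of the slice of prism `R_{k,c}`. -/
def sliceCount (n : ℕ) (c : Fin n → ℕ) (k t : ℕ) : ℕ :=
  ((Fintype.piFinset (fun i : Fin n => Finset.range (c i * t + 1))).filter
    (fun x => ∑ i, x i = k * t)).card

/-!
Since `∏ᵢ (1 + x + ⋯ + x ^ (bᵢ - 1)) = ∏ᵢ (1 - x ^ bᵢ) / (1 - x) ^ n`, reading off the coefficient
of `x ^ (k t)` with `bᵢ = cᵢ t + 1` gives, for `t ≥ n`, the inclusion–exclusion formula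
`#(t R_{k,c}) = ∑_{S, c(S) < k} (-1) ^ |S| * choose (n - 1 + (k - c(S)) t - |S|) (n - 1)`.
It is a polynomial in `t` whose coefficient of `t ^ (n - 1)` is
`(1 / (n - 1)!) ∑_{S, c(S) < k} (-1) ^ |S| (k - c(S)) ^ (n - 1)`.

Worpitzky's identity `∑_{r ≥ 0} (r + 1) ^ d x ^ r = (∑_σ x ^ des σ) / (1 - x) ^ (d + 1)` comes from
sorting: the maps `Fin d → Fin (r + 1)` sorted by `σ` are the weakly increasing sequences that
increase strictly across the descents of `σ`, and there are `choose (r + d - des σ) d` of them.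
Multiplying it by `x ∏ᵢ (1 - x ^ cᵢ) = x (1 - x) ^ n ∏ᵢ (1 + ⋯ + x ^ (cᵢ - 1))` and comparing
coefficients of `x ^ k` turns the alternating sum into `∑_ℓ B(ℓ, c) A(n - 1, k - ℓ - 1)`.
-/

open Finset

section BoxSeries

open PowerSeries

variable {R : Type*} [CommRing R] {ι : Type*} [Fintype ι]

theorem prod_one_sub_X_pow_eq_one_sub_X_pow_mul_prod (b : ι → ℕ) :
    ∏ i, (1 - (X : R⟦X⟧) ^ b i) =
      (1 - X) ^ Fintype.card ι * ∏ i, ∑ j ∈ range (b i), X ^ j := by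
  rw [← card_univ, ← prod_const, ← prod_mul_distrib]
  exact prod_congr rfl fun i _ => (mul_neg_geom_sum _ _).symm

variable [DecidableEq ι]

theorem coeff_prod_sum_range_X_pow (b : ι → ℕ) (N : ℕ) :
    coeff N (∏ i, ∑ j ∈ range (b i), (X : R⟦X⟧) ^ j) =
      #{x ∈ Fintype.piFinset fun i => range (b i) | ∑ i, x i = N} := by
  simp_rw [prod_univ_sum, map_sum, prod_pow_eq_pow_sum, coeff_X_pow, eq_comm (a := N), sum_boole]

theorem prod_one_sub_X_pow_eq_sum_powerset (b : ι → ℕ) :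
    ∏ i, (1 - (X : R⟦X⟧) ^ b i) = ∑ S ∈ univ.powerset, C ((-1) ^ #S) * X ^ ∑ i ∈ S, b i := by
  simp [prod_sub, prod_pow_eq_pow_sum]

theorem prod_sum_range_X_pow_eq_sum_powerset_mul (b : ι → ℕ) :
    ∏ i, ∑ j ∈ range (b i), (X : R⟦X⟧) ^ j =
      (∑ S ∈ univ.powerset, C ((-1) ^ #S) * X ^ ∑ i ∈ S, b i) *
        (invOneSubPow R (Fintype.card ι)).val := by
  rw [← prod_one_sub_X_pow_eq_sum_powerset, prod_one_sub_X_pow_eq_one_sub_X_pow_mul_prod,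
    ← invOneSubPow_inv_eq_one_sub_pow, mul_comm, ← mul_assoc, Units.val_inv, one_mul]

theorem card_filter_sum_eq_sum_powerset {d : ℕ} (b : Fin (d + 1) → ℕ) (N : ℕ) :
    (#{x ∈ Fintype.piFinset fun i => range (b i) | ∑ i, x i = N} : R) =
      ∑ S ∈ univ.powerset, if ∑ i ∈ S, b i ≤ N then
        (-1) ^ #S * ((d + (N - ∑ i ∈ S, b i)).choose d : R) else 0 := by
  rw [← coeff_prod_sum_range_X_pow, prod_sum_range_X_pow_eq_sum_powerset_mul, Fintype.card_fin,
    invOneSubPow_val_succ_eq_mk_add_choose, sum_mul, map_sum]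
  refine sum_congr rfl fun S _ => ?_
  rw [mul_assoc, coeff_C_mul, coeff_X_pow_mul', coeff_mk]
  split_ifs <;> simp

end BoxSeries

section SlicePolynomial

open Polynomial

theorem coeff_comp_linear {K : Type*} [Field K] (p : K[X]) {a : K} (ha : a ≠ 0) (b : K) :
    (p.comp (C a * X + C b)).coeff p.natDegree = p.leadingCoeff * a ^ p.natDegree := by
  have hq : (C a * X + C b).natDegree = 1 := natDegree_linear ha
  have := coeff_comp_degree_mul_degree (p := p) (hq ▸ one_ne_zero)
  rwa [hq, mul_one, leadingCoeff_linear ha] at this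

theorem eq_of_eval_natCast_eq {K : Type*} [Field K] [CharZero K] {p q : K[X]} (N : ℕ)
    (h : ∀ t : ℕ, N ≤ t → p.eval (t : K) = q.eval (t : K)) : p = q := by
  refine eq_of_infinite_eval_eq p q (Set.infinite_of_injective_forall_mem
    (f := fun s : ℕ => ((s + N : ℕ) : K)) ?_ fun s => h _ (by omega))
  exact fun a b hab => by simpa using hab

variable {d : ℕ}

/-- The inclusion–exclusion count of `sliceCount (d + 1) c k t` as a polynomial in `t`, via
`choose (d + M) d = descPochhammer d (d + M) / d!` with `M = (k - c(S)) t - |S|`. -/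
noncomputable def slicePoly (c : Fin (d + 1) → ℕ) (k : ℕ) : ℚ[X] :=
  ∑ S ∈ univ.powerset with ∑ i ∈ S, c i < k,
    C ((-1 : ℚ) ^ #S / d.factorial) *
      (descPochhammer ℚ d).comp (C ((k : ℚ) - ∑ i ∈ S, c i) * X + C ((d : ℚ) - #S))

theorem coeff_slicePoly (c : Fin (d + 1) → ℕ) (k : ℕ) :
    (slicePoly c k).coeff d = ∑ S ∈ univ.powerset with ∑ i ∈ S, c i < k,
      (-1) ^ #S / d.factorial * ((k : ℚ) - ∑ i ∈ S, c i) ^ d := by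
  rw [slicePoly, finsetSum_coeff]
  refine sum_congr rfl fun S hS => ?_
  have hpos : ((∑ i ∈ S, c i : ℕ) : ℚ) < k := by exact_mod_cast (mem_filter.1 hS).2
  have := coeff_comp_linear (descPochhammer ℚ d) (sub_ne_zero.2 hpos.ne') ((d : ℚ) - #S)
  rw [descPochhammer_natDegree, (monic_descPochhammer ℚ d).leadingCoeff, one_mul] at this
  rw [coeff_C_mul, this]

theorem eval_slicePoly (c : Fin (d + 1) → ℕ) {k : ℕ} (hk : 0 < k) {t : ℕ} (ht : d + 1 ≤ t) :
    (slicePoly c k).eval (t : ℚ) = sliceCount (d + 1) c k t := by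
  rw [sliceCount, card_filter_sum_eq_sum_powerset, slicePoly, eval_finsetSum, sum_filter]
  refine sum_congr rfl fun S _ => ?_
  have hS : #S ≤ d + 1 := card_le_univ S |>.trans_eq (Fintype.card_fin _)
  have hsum : ∑ i ∈ S, (c i * t + 1) = (∑ i ∈ S, c i) * t + #S := by
    rw [sum_add_distrib, sum_mul, card_eq_sum_ones]
  rw [hsum]
  split_ifs with hlt hle hle
  · have harg : ((k : ℚ) - (∑ i ∈ S, c i : ℕ)) * t + ((d : ℚ) - #S) =
        ((d + (k * t - ((∑ i ∈ S, c i) * t + #S)) : ℕ) : ℚ) := by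
      push_cast [Nat.cast_sub hle]
      ring
    rw [eval_mul, eval_C, eval_comp, eval_add, eval_mul, eval_C, eval_X, eval_C, harg,
      descPochhammer_eval_eq_descFactorial, Nat.descFactorial_eq_factorial_mul_choose]
    push_cast
    field_simp
  · exfalso
    have : (∑ i ∈ S, c i) * t + t ≤ k * t := by nlinarith
    omega
  · exfalso
    have : k * t ≤ (∑ i ∈ S, c i) * t := by nlinarith
    have hS0 : S = ∅ := card_eq_zero.1 (by omega)
    rw [hS0, sum_empty] at hlt
    omega
  · rfl

end SlicePolynomial

section ForcedSteps

-- A step `a : Fin e` goes from `a.castSucc` to `a.succ`; the steps in `D` are to be strict.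
variable {e : ℕ} (D : Finset (Fin e))

def freeStepsBelow (j : Fin (e + 1)) : ℕ := #{a : Fin e | a ∉ D ∧ a.succ ≤ j}

theorem freeStepsBelow_succ (a : Fin e) :
    freeStepsBelow D a.succ = freeStepsBelow D a.castSucc + if a ∈ D then 0 else 1 := by
  unfold freeStepsBelow
  split_ifs with ha
  · rw [add_zero]
    congr 1
    ext b
    simp only [mem_filter, mem_univ, true_and, Fin.succ_le_succ_iff, Fin.succ_le_castSucc_iff]
    exact and_congr_right fun hb => (ne_of_mem_of_not_mem ha hb).symm.le_iff_lt
  · rw [← card_insert_of_notMem (s := {b : Fin e | b ∉ D ∧ b.succ ≤ a.castSucc}) (a := a)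
      (by simp [Fin.succ_le_castSucc_iff])]
    congr 1
    ext b
    simp only [mem_filter, mem_univ, true_and, Fin.succ_le_succ_iff, Fin.succ_le_castSucc_iff,
      mem_insert]
    rcases eq_or_ne b a with rfl | hba
    · simp [ha]
    · simp [hba, Ne.le_iff_lt hba]

theorem freeStepsBelow_le (j : Fin (e + 1)) : freeStepsBelow D j ≤ j := by
  calc freeStepsBelow D j ≤ #(range j) := by
        refine card_le_card_of_injOn (fun a => (a : ℕ)) (fun a ha => ?_) Fin.val_injective.injOn
        simp only [coe_filter, mem_univ, true_and, Set.mem_ofPred_eq] at ha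
        simpa [Fin.le_def] using ha.2
    _ = j := card_range _

theorem freeStepsBelow_le_sub_card (j : Fin (e + 1)) : freeStepsBelow D j ≤ e - #D := by
  calc freeStepsBelow D j ≤ #Dᶜ := card_le_card fun a => by simp +contextual
    _ = e - #D := by rw [card_compl, Fintype.card_fin]

theorem freeStepsBelow_last : freeStepsBelow D (Fin.last e) = e - #D := by
  calc freeStepsBelow D (Fin.last e) = #Dᶜ := by
        rw [freeStepsBelow]
        congr 1
        ext a
        simp [Fin.le_last]
    _ = e - #D := by rw [card_compl, Fintype.card_fin]

theorem Fin.le_apply_of_strictMono {h : Fin (e + 1) → ℕ} (hh : StrictMono h) (j : Fin (e + 1)) :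
    (j : ℕ) ≤ h j := by
  induction j using Fin.induction with
  | zero => simp
  | succ a ih =>
    have := hh (Fin.castSucc_lt_succ (i := a))
    simp only [Fin.val_castSucc, Fin.val_succ] at ih ⊢
    omega

variable {D}

theorem strictMono_add_freeStepsBelow {g : Fin (e + 1) → ℕ} (hg : Monotone g)
    (hD : ∀ a ∈ D, g a.castSucc < g a.succ) :
    StrictMono fun j => g j + freeStepsBelow D j := by
  refine Fin.strictMono_iff_lt_succ.2 fun a => ?_
  have hle := Fin.monotone_iff_le_succ.1 hg a
  simp only [freeStepsBelow_succ]
  split_ifs with ha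
  · have := hD a ha
    omega
  · omega

theorem freeStepsBelow_le_of_strictMono {h : Fin (e + 1) → ℕ} (hh : StrictMono h)
    (j : Fin (e + 1)) : freeStepsBelow D j ≤ h j :=
  (freeStepsBelow_le D j).trans (Fin.le_apply_of_strictMono hh j)

theorem monotone_sub_freeStepsBelow {h : Fin (e + 1) → ℕ} (hh : StrictMono h) :
    Monotone fun j => h j - freeStepsBelow D j := by
  refine Fin.monotone_iff_le_succ.2 fun a => ?_
  have hlt := Fin.strictMono_iff_lt_succ.1 hh a
  have := freeStepsBelow_le_of_strictMono (D := D) hh a.castSucc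
  simp only [freeStepsBelow_succ]
  split_ifs <;> omega

theorem sub_freeStepsBelow_lt_of_mem {h : Fin (e + 1) → ℕ} (hh : StrictMono h) {a : Fin e}
    (ha : a ∈ D) :
    h a.castSucc - freeStepsBelow D a.castSucc < h a.succ - freeStepsBelow D a.succ := by
  have hlt := Fin.strictMono_iff_lt_succ.1 hh a
  have := freeStepsBelow_le_of_strictMono (D := D) hh a.castSucc
  rw [freeStepsBelow_succ, if_pos ha]
  omega

variable (D)

/-- Stars and bars: adding `freeStepsBelow D j` at `j` makes every step strict. -/
def monotoneStrictAtStepsEquiv (m : ℕ) :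
    {g : Fin (e + 1) → Fin m // Monotone g ∧ ∀ a ∈ D, g a.castSucc < g a.succ} ≃
      (Fin (e + 1) ↪o Fin (m + e - #D)) where
  toFun g := OrderEmbedding.ofStrictMono
    (fun j => ⟨g.1 j + freeStepsBelow D j, by
      have := (g.1 j).2
      have := freeStepsBelow_le_sub_card D j
      have : #D ≤ e := by simpa using card_le_univ D
      omega⟩)
    (strictMono_add_freeStepsBelow (Fin.val_strictMono.monotone.comp g.2.1) g.2.2)
  invFun h := ⟨fun j => ⟨h j - freeStepsBelow D j, by
      have hh := Fin.val_strictMono.comp h.strictMono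
      have hmono := monotone_sub_freeStepsBelow (D := D) hh (Fin.le_last j)
      have hlast := freeStepsBelow_le_of_strictMono (D := D) hh (Fin.last e)
      have := (h (Fin.last e)).2
      simp only [Function.comp_apply, freeStepsBelow_last] at hmono hlast
      omega⟩,
    fun i j hij => monotone_sub_freeStepsBelow (Fin.val_strictMono.comp h.strictMono) hij,
    fun a ha => sub_freeStepsBelow_lt_of_mem (Fin.val_strictMono.comp h.strictMono) ha⟩
  left_inv g := by
    ext j
    exact Nat.add_sub_cancel _ _
  right_inv h := by
    ext j
    exact Nat.sub_add_cancel (freeStepsBelow_le_of_strictMono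
      (Fin.val_strictMono.comp h.strictMono) j)

theorem card_monotone_strict_at_steps (m : ℕ) :
    Fintype.card {g : Fin (e + 1) → Fin m // Monotone g ∧ ∀ a ∈ D, g a.castSucc < g a.succ} =
      (m + e - #D).choose (e + 1) := by
  rw [← Nat.card_eq_fintype_card,
    Nat.card_congr ((monotoneStrictAtStepsEquiv D m).trans Set.powersetCard.ofFinEmbEquiv),
    Set.powersetCard.card, Nat.card_eq_fintype_card, Fintype.card_fin]

end ForcedSteps

section Worpitzky

open Equiv

variable {e : ℕ}

def descents (σ : Perm (Fin (e + 1))) : Finset (Fin e) := {a | σ a.succ < σ a.castSucc}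

theorem descNum_eq_card_descents (σ : Perm (Fin (e + 1))) : descNum σ = #(descents σ) := by
  simp only [descNum, descents, card_filter]
  rw [Fin.sum_univ_castSucc]
  simp [Fin.succ, Fin.castSucc]

theorem notMem_descents_iff {σ : Perm (Fin (e + 1))} {a : Fin e} :
    a ∉ descents σ ↔ σ a.castSucc < σ a.succ := by
  simp only [descents, mem_filter, mem_univ, true_and, not_lt]
  exact (σ.injective.ne Fin.castSucc_lt_succ.ne).le_iff_lt

theorem sort_eq_iff_forall_succ {α : Type*} [LinearOrder α] {f : Fin (e + 1) → α}
    {σ : Perm (Fin (e + 1))} :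
    Tuple.sort f = σ ↔ ∀ a : Fin e, f (σ a.castSucc) < f (σ a.succ) ∨
      f (σ a.castSucc) = f (σ a.succ) ∧ σ a.castSucc < σ a.succ := by
  rw [eq_comm, Tuple.eq_sort_iff', Fin.strictMono_iff_lt_succ]
  simp only [Equiv.trans_apply, Tuple.graphEquiv₁, Equiv.coe_fn_mk]
  exact forall_congr' fun a => Prod.Lex.toLex_lt_toLex

theorem descNum_le {d : ℕ} (σ : Perm (Fin d)) : descNum σ ≤ d :=
  (card_filter_le _ _).trans_eq (card_fin d)

theorem sort_eq_iff_monotone_and_lt_of_mem_descents {α : Type*} [LinearOrder α] {e : ℕ}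
    {f : Fin (e + 1) → α} {σ : Perm (Fin (e + 1))} :
    Tuple.sort f = σ ↔ Monotone (f ∘ σ) ∧ ∀ a ∈ descents σ, f (σ a.castSucc) < f (σ a.succ) := by
  simp_rw [sort_eq_iff_forall_succ, Fin.monotone_iff_le_succ, ← forall_and, ← notMem_descents_iff]
  refine forall_congr' fun a => ?_
  by_cases ha : a ∈ descents σ
  · simp only [ha, not_true_eq_false, and_false, or_false, forall_const]
    exact ⟨fun h => ⟨h.le, h⟩, And.right⟩
  · simp [ha, le_iff_lt_or_eq]

theorem card_sort_eq_choose (r : ℕ) {d : ℕ} (σ : Perm (Fin d)) :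
    #{f : Fin d → Fin (r + 1) | Tuple.sort f = σ} = (r + d - descNum σ).choose d := by
  cases d with
  | zero => simp [Subsingleton.elim _ σ]
  | succ e =>
    rw [← Fintype.card_subtype,
      Fintype.card_congr ((arrowCongr σ.symm (Equiv.refl _)).subtypeEquiv
        (p := fun f => Tuple.sort f = σ)
        (q := fun g => Monotone g ∧ ∀ a ∈ descents σ, g a.castSucc < g a.succ)
        fun f => sort_eq_iff_monotone_and_lt_of_mem_descents),
      card_monotone_strict_at_steps, descNum_eq_card_descents]
    congr 1
    omega

theorem succ_pow_eq_sum_choose_descNum (d r : ℕ) :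
    (r + 1) ^ d = ∑ σ : Perm (Fin d), (r + d - descNum σ).choose d := by
  simp_rw [← card_sort_eq_choose r]
  rw [← card_eq_sum_card_fiberwise fun f _ => mem_univ (Tuple.sort f), card_univ]
  simp

theorem mk_succ_pow_mul_one_sub_pow (R : Type*) [CommRing R] (d : ℕ) :
    PowerSeries.mk (fun r => (((r + 1) ^ d : ℕ) : R)) * (1 - PowerSeries.X) ^ (d + 1) =
      ∑ σ : Perm (Fin d), PowerSeries.X ^ descNum σ := by
  have : PowerSeries.mk (fun r => (((r + 1) ^ d : ℕ) : R)) =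
      (∑ σ : Perm (Fin d), PowerSeries.X ^ descNum σ) *
        PowerSeries.mk fun r => ((d + r).choose d : R) := by
    ext r
    rw [PowerSeries.coeff_mk, sum_mul, map_sum, succ_pow_eq_sum_choose_descNum, Nat.cast_sum]
    refine sum_congr rfl fun σ _ => ?_
    rw [PowerSeries.coeff_X_pow_mul', PowerSeries.coeff_mk]
    split_ifs with h
    · congr 2
      omega
    · have := descNum_le σ
      rw [Nat.choose_eq_zero_of_lt (by omega), Nat.cast_zero]
  rw [this, mul_assoc, PowerSeries.mk_add_choose_mul_one_sub_pow_eq_one, mul_one]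

end Worpitzky

section AlternatingSum

open PowerSeries

theorem sum_ite_descNum_eq_sum_eulerian {R : Type*} [CommSemiring R] (d k : ℕ) (g : ℕ → R) :
    ∑ σ : Equiv.Perm (Fin d), (if descNum σ < k then g (k - 1 - descNum σ) else 0) =
      ∑ ℓ ∈ range k, g ℓ * eulerian d (k - ℓ - 1) := by
  have heulerian (i : ℕ) :
      (eulerian d i : R) = ∑ σ : Equiv.Perm (Fin d), if descNum σ = i then 1 else 0 := by
    rw [sum_boole, eulerian, Nat.card_eq_fintype_card, Fintype.card_subtype]
  rw [← sum_range_reflect]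
  simp_rw [heulerian, mul_sum, mul_ite, mul_one, mul_zero]
  rw [sum_comm]
  refine sum_congr rfl fun σ _ => ?_
  calc _ = ∑ x ∈ range k, if descNum σ = x then g (k - 1 - x) else 0 := by
        simp only [sum_ite_eq, mem_range]
    _ = _ := sum_congr rfl fun x hx => by
        rw [show k - (k - 1 - x) - 1 = x by have := mem_range.1 hx; omega]

variable {ι : Type*} [Fintype ι]

theorem coeff_sum_powerset_mul_X_mul_mk (c : ι → ℕ) (d k : ℕ) :
    coeff k ((∑ S ∈ univ.powerset, C ((-1 : ℚ) ^ #S) * X ^ ∑ i ∈ S, c i) *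
      (X * PowerSeries.mk fun r => (((r + 1) ^ d : ℕ) : ℚ))) =
    ∑ S ∈ univ.powerset with ∑ i ∈ S, c i < k, (-1) ^ #S * ((k : ℚ) - (∑ i ∈ S, c i : ℕ)) ^ d := by
  rw [sum_mul, map_sum, sum_filter]
  refine sum_congr rfl fun S _ => ?_
  rw [mul_assoc, coeff_C_mul, ← mul_assoc, ← pow_succ, coeff_X_pow_mul', coeff_mk]
  split_ifs with h₁ h₂ h₂
  · rw [show k - (∑ i ∈ S, c i + 1) + 1 = k - ∑ i ∈ S, c i by omega, Nat.cast_pow,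
      Nat.cast_sub h₂.le]
  · omega
  · omega
  · rw [mul_zero]

theorem coeff_prod_sum_range_mul_X_mul_sum [DecidableEq ι] (c : ι → ℕ) (d k : ℕ) :
    coeff k ((∏ i, ∑ j ∈ range (c i), (X : ℚ⟦X⟧) ^ j) *
        (X * ∑ σ : Equiv.Perm (Fin d), X ^ descNum σ)) =
      ∑ σ : Equiv.Perm (Fin d), if descNum σ < k then
        (#{x ∈ Fintype.piFinset fun i => range (c i) | ∑ i, x i = k - 1 - descNum σ} : ℚ)
      else 0 := by
  rw [mul_sum, mul_sum, map_sum]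
  refine sum_congr rfl fun σ _ => ?_
  rw [← pow_succ', coeff_mul_X_pow', coeff_prod_sum_range_X_pow,
    show k - (descNum σ + 1) = k - 1 - descNum σ by omega]
  simp only [Nat.add_one_le_iff]

theorem sum_powerset_sub_pow_eq_sum_ballCount_mul_eulerian {d : ℕ} (c : Fin (d + 1) → ℕ) (k : ℕ) :
    ∑ S ∈ univ.powerset with ∑ i ∈ S, c i < k, (-1) ^ #S * ((k : ℚ) - (∑ i ∈ S, c i : ℕ)) ^ d =
      ∑ ℓ ∈ range k, (ballCount (d + 1) c ℓ : ℚ) * eulerian d (k - ℓ - 1) := by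
  have hseries : (∏ i, (1 - X ^ c i)) * (X * PowerSeries.mk fun r => (((r + 1) ^ d : ℕ) : ℚ)) =
      (∏ i, ∑ j ∈ range (c i), X ^ j) * (X * ∑ σ : Equiv.Perm (Fin d), X ^ descNum σ) := by
    rw [prod_one_sub_X_pow_eq_one_sub_X_pow_mul_prod, Fintype.card_fin, ← mk_succ_pow_mul_one_sub_pow]
    ring
  have := congrArg (coeff k) hseries
  rw [prod_one_sub_X_pow_eq_sum_powerset, coeff_sum_powerset_mul_X_mul_mk,
    coeff_prod_sum_range_mul_X_mul_sum] at this
  exact this.trans (sum_ite_descNum_eq_sum_eulerian d k fun ℓ => (ballCount (d + 1) c ℓ : ℚ))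

end AlternatingSum

theorem stmt15_general (n k : ℕ) (c : Fin n → ℕ)
    (hk0 : 0 < k) (hk : k < ∑ i, c i)
    (p : Polynomial ℚ) (hp : ∀ t : ℕ, 0 < t → p.eval (t : ℚ) = sliceCount n c k t) :
    p.coeff (n - 1) = (1 / ((n - 1).factorial : ℚ)) *
      ∑ ℓ ∈ Finset.range k, (ballCount n c ℓ : ℚ) * (eulerian (n - 1) (k - ℓ - 1) : ℚ) := by
  obtain ⟨d, rfl⟩ : ∃ d, n = d + 1 := Nat.exists_eq_add_one.2 <| Nat.pos_of_ne_zero <| by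
    rintro rfl
    simp at hk
  have hp_eq : p = slicePoly c k := eq_of_eval_natCast_eq (d + 1) fun t ht => by
    rw [hp t (by omega), eval_slicePoly c hk0 ht]
  rw [hp_eq, Nat.add_sub_cancel, coeff_slicePoly,
    ← sum_powerset_sub_pow_eq_sum_ballCount_mul_eulerian, mul_sum]
  exact sum_congr rfl fun S _ => by ring

theorem stmt15 (n k : ℕ) (c : Fin n → ℕ) (hc : ∀ i, 0 < c i)
    (hk0 : 0 < k) (hk : k < ∑ i, c i)
    (p : Polynomial ℚ) (hp : ∀ t : ℕ, 0 < t → p.eval (t : ℚ) = sliceCount n c k t) :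
    p.coeff (n - 1) = (1 / ((n - 1).factorial : ℚ)) *
      ∑ ℓ ∈ Finset.range k, (ballCount n c ℓ : ℚ) * (eulerian (n - 1) (k - ℓ - 1) : ℚ) :=
  stmt15_general n k c hk0 hk p hp
end
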